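/- arXiv:1305.2725 — 5 statements merged into one kernel-verified Lean document; each statement's English description precedes it below -/
import Mathlib

section
/- (Nagao) Let N be a normal subgroup of a finite group X. Then k(X) ≤ k(N) · k(X/N). -/
open MulAction

/-- Type synonym for the twisted conjugation action. -/
def TwG (G : Type*) [Group G] (_φ : G →* G) : Type _ := G

namespace TwG

variable {G : Type*} [Group G] (φ : G →* G)

/-- The identity map from `G` to `TwG G φ`. -/
def mk : G ≃ TwG G φ := Equiv.refl G

lemma mk_symm_apply (x : G) : (mk φ).symm (mk φ x) = x := rfl
lemma mk_apply_symm (m : TwG G φ) : mk φ ((mk φ).symm m) = m := rfl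

instance : MulAction G (TwG G φ) where
  smul n m := mk φ (φ n * (mk φ).symm m * n⁻¹)
  one_smul m := by
    show mk φ (φ 1 * (mk φ).symm m * 1⁻¹) = m
    rw [map_one, one_mul, inv_one, mul_one, mk_apply_symm]
  mul_smul a b m := by
    show mk φ (φ (a*b) * (mk φ).symm m * (a*b)⁻¹)
      = mk φ (φ a * (mk φ).symm (mk φ (φ b * (mk φ).symm m * b⁻¹)) * a⁻¹)
    refine congrArg (mk φ) ?_
    rw [mk_symm_apply, map_mul, mul_inv_rev]
    group

lemma smul_def (n : G) (m : TwG G φ) :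
    n • m = mk φ (φ n * (mk φ).symm m * n⁻¹) := rfl

/-- The number of orbits of the twisted conjugation action is at most the number
of conjugacy classes. -/
lemma card_orbits_le [Finite G] :
    Nat.card (orbitRel.Quotient G (TwG G φ)) ≤ Nat.card (ConjClasses G) := by
  classical
  cases nonempty_fintype G
  have : Fintype (TwG G φ) := ‹Fintype G›
  have hΩ : Fintype (orbitRel.Quotient G (TwG G φ)) := Fintype.ofFinite _
  have hC : Fintype (ConjClasses G) := Fintype.ofFinite _
  rw [Nat.card_eq_fintype_card, Nat.card_eq_fintype_card]
  have hpos : 0 < Fintype.card G := Fintype.card_pos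
  refine Nat.le_of_mul_le_mul_right ?_ hpos
  rw [mul_comm (Fintype.card (orbitRel.Quotient G (TwG G φ)))] at *
  rw [mul_comm, ← MulAction.sum_card_fixedBy_eq_card_orbits_mul_card_group G (TwG G φ), mul_comm]
  have hcomm : Fintype.card (ConjClasses G) * Fintype.card G
      = ∑ n : G, Fintype.card {m : G // Commute n m} := by
    have h := card_comm_eq_card_conjClasses_mul_card G
    rw [Nat.card_eq_fintype_card, Nat.card_eq_fintype_card, Nat.card_eq_fintype_card] at h
    rw [← h, Fintype.card_congr (Equiv.subtypeProdEquivSigmaSubtype (fun a b : G => Commute a b)),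
      Fintype.card_sigma]
  rw [mul_comm, hcomm]
  apply Finset.sum_le_sum
  intro n _
  -- fixed points of twisted action by n inject into the centralizer of n
  by_cases hne : (fixedBy (TwG G φ) n).Nonempty
  · obtain ⟨m₀, hm₀⟩ := hne
    have hm₀' : φ n * (mk φ).symm m₀ * n⁻¹ = (mk φ).symm m₀ := hm₀
    apply Fintype.card_le_of_injective
      (fun m => ⟨((mk φ).symm m₀)⁻¹ * (mk φ).symm m.1, by
        have hm : φ n * (mk φ).symm m.1 * n⁻¹ = (mk φ).symm m.1 := m.2
        set a := (mk φ).symm m₀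
        set b := (mk φ).symm m.1
        have h1 : φ n * b = b * n := by
          have := hm; group at this ⊢
          calc φ n * b = (φ n * b * n⁻¹) * n := by group
          _ = b * n := by rw [hm]
        have h2 : φ n * a = a * n := by
          calc φ n * a = (φ n * a * n⁻¹) * n := by group
          _ = a * n := by rw [hm₀']
        show n * (a⁻¹ * b) = (a⁻¹ * b) * n
        have h2' : a⁻¹ * φ n = n * a⁻¹ := by
          rw [eq_comm, ← mul_inv_eq_iff_eq_mul] at h2
          calc a⁻¹ * φ n = a⁻¹ * (φ n * a * a⁻¹) := by group
          _ = a⁻¹ * (a * n * a⁻¹) := by rw [mul_assoc] at h2 ⊢; rw [← h2]; group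
          _ = n * a⁻¹ := by group
        calc n * (a⁻¹ * b) = (n * a⁻¹) * b := by group
        _ = a⁻¹ * (φ n * b) := by rw [← h2']; group
        _ = (a⁻¹ * b) * n := by rw [h1]; group⟩)
    intro x y hxy
    have := congrArg Subtype.val hxy
    simp only [mul_right_inj] at this
    exact Subtype.ext ((mk φ).symm.injective this)
  · rw [Set.not_nonempty_iff_eq_empty] at hne
    have : IsEmpty (fixedBy (TwG G φ) n) := by rw [hne]; exact Set.isEmpty_coe_sort.mpr rfl
    simp

end TwG

/-- `k X` is the number of conjugacy classes of `X`. -/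
noncomputable def numConjClasses (X : Type*) [Group X] : ℕ := Nat.card (ConjClasses X)

/-- **Nagao's lemma.** If `N` is a normal subgroup of a finite group `X`, then
`k(X) ≤ k(N) · k(X/N)`. -/
theorem nagao (X : Type*) [Group X] [Finite X] (N : Subgroup X) [N.Normal] :
    numConjClasses X ≤ numConjClasses N * numConjClasses (X ⧸ N) := by
  classical
  set f : ConjClasses X → ConjClasses (X ⧸ N) := ConjClasses.map (QuotientGroup.mk' N) with hf
  have key : ∀ cb : ConjClasses (X ⧸ N),
      Nat.card {c : ConjClasses X // f c = cb} ≤ numConjClasses N := by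
    intro cb
    obtain ⟨q, rfl⟩ := ConjClasses.mk_surjective cb
    obtain ⟨g, rfl⟩ := QuotientGroup.mk_surjective q
    set φ : N →* N := (MulAut.conjNormal g⁻¹ : MulAut N).toMonoidHom with hφ
    have hφval : ∀ n : N, (φ n : X) = g⁻¹ * n * g := by
      intro n
      rw [hφ]
      show ((MulAut.conjNormal g⁻¹ n : N) : X) = g⁻¹ * n * g
      rw [MulAut.conjNormal_apply]
      group
    -- the map from twisted orbits onto the fiber
    have himg : ∀ m : TwG N φ,
        f (ConjClasses.mk (g * ((TwG.mk φ).symm m : X)))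
          = ConjClasses.mk (QuotientGroup.mk g : X ⧸ N) := by
      intro m
      show ConjClasses.mk (QuotientGroup.mk' N (g * ((TwG.mk φ).symm m : X)))
        = ConjClasses.mk (QuotientGroup.mk g)
      congr 1
      rw [map_mul]
      have : (QuotientGroup.mk' N) ((TwG.mk φ).symm m : X) = 1 :=
        (QuotientGroup.eq_one_iff _).mpr ((TwG.mk φ).symm m).2
      rw [this, mul_one]
      rfl
    let Ψ : MulAction.orbitRel.Quotient N (TwG N φ) →
        {c : ConjClasses X // f c = ConjClasses.mk (QuotientGroup.mk g : X ⧸ N)} :=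
      Quotient.lift (fun m => ⟨ConjClasses.mk (g * ((TwG.mk φ).symm m : X)), himg m⟩)
        (by
          rintro a b ⟨n, rfl⟩
          refine Subtype.ext ?_
          show ConjClasses.mk (g * ((TwG.mk φ).symm (n • b) : X))
            = ConjClasses.mk (g * ((TwG.mk φ).symm b : X))
          rw [ConjClasses.mk_eq_mk_iff_isConj, isConj_iff]
          refine ⟨(n : X)⁻¹, ?_⟩
          have : ((TwG.mk φ).symm (n • b) : X) = (φ n : X) * ((TwG.mk φ).symm b : X) * (n : X)⁻¹ := by
            rw [TwG.smul_def, TwG.mk_symm_apply]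
            push_cast
            rfl
          rw [this, hφval]
          group)
    have hΨsurj : Function.Surjective Ψ := by
      rintro ⟨c, hc⟩
      obtain ⟨x, rfl⟩ := ConjClasses.mk_surjective c
      have hc' : IsConj (QuotientGroup.mk x : X ⧸ N) (QuotientGroup.mk g) := by
        rw [← ConjClasses.mk_eq_mk_iff_isConj]
        exact hc
      obtain ⟨t', ht'⟩ := isConj_iff.mp hc'
      obtain ⟨t, rfl⟩ := QuotientGroup.mk_surjective t'
      have hmem : g⁻¹ * (t * x * t⁻¹) ∈ N := by
        rw [← QuotientGroup.eq_one_iff]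
        have : (QuotientGroup.mk (t * x * t⁻¹) : X ⧸ N) = QuotientGroup.mk g := by
          rw [← ht']
          rfl
        rw [QuotientGroup.mk_mul, this, QuotientGroup.mk_inv, inv_mul_cancel]
      refine ⟨Quotient.mk _ (TwG.mk φ ⟨g⁻¹ * (t * x * t⁻¹), hmem⟩), ?_⟩
      refine Subtype.ext ?_
      show ConjClasses.mk (g * ((TwG.mk φ).symm (TwG.mk φ ⟨g⁻¹ * (t * x * t⁻¹), hmem⟩) : X))
        = ConjClasses.mk x
      rw [TwG.mk_symm_apply]
      show ConjClasses.mk (g * (g⁻¹ * (t * x * t⁻¹))) = ConjClasses.mk x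
      rw [ConjClasses.mk_eq_mk_iff_isConj, isConj_iff]
      exact ⟨t⁻¹, by group⟩
    have hft : Finite (TwG N φ) := Finite.of_equiv _ (TwG.mk φ)
    have hfo : Finite (MulAction.orbitRel.Quotient N (TwG N φ)) := Quotient.finite _
    calc Nat.card {c : ConjClasses X // f c = ConjClasses.mk (QuotientGroup.mk g : X ⧸ N)}
        ≤ Nat.card (MulAction.orbitRel.Quotient N (TwG N φ)) :=
          Nat.card_le_card_of_surjective Ψ hΨsurj
      _ ≤ Nat.card (ConjClasses N) := TwG.card_orbits_le φ
  -- sum over fibers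
  cases nonempty_fintype X
  have : Fintype (ConjClasses X) := Fintype.ofFinite _
  have : Fintype (ConjClasses (X ⧸ N)) := Fintype.ofFinite _
  have hfib : ∀ cb, Fintype {c : ConjClasses X // f c = cb} := fun _ => Fintype.ofFinite _
  have h1 : numConjClasses X = ∑ cb : ConjClasses (X ⧸ N),
      Nat.card {c : ConjClasses X // f c = cb} := by
    rw [numConjClasses, Nat.card_eq_fintype_card,
      Fintype.card_congr (Equiv.sigmaFiberEquiv f).symm, Fintype.card_sigma]
    exact Finset.sum_congr rfl fun cb _ => (Nat.card_eq_fintype_card).symm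
  rw [h1]
  calc ∑ cb : ConjClasses (X ⧸ N), Nat.card {c : ConjClasses X // f c = cb}
      ≤ ∑ _cb : ConjClasses (X ⧸ N), numConjClasses N :=
        Finset.sum_le_sum fun cb _ => key cb
    _ = numConjClasses N * numConjClasses (X ⧸ N) := by
        rw [Finset.sum_const, Finset.card_univ, smul_eq_mul, mul_comm]
        simp only [numConjClasses, Nat.card_eq_fintype_card]
end

section
/- Let H be a subgroup of a finite group X. Then k(H) ≤ √(|X| · k(X)), i.e. k(H)² ≤ |X| · k(X). -/
/-- If `H` is a subgroup of a finite group `X`, then `k(H) ≤ √(|X| · k(X))`,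
i.e. `k(H)² ≤ |X| · k(X)`. -/
theorem conjClasses_subgroup_sq_le (X : Type*) [Group X] [Finite X] (H : Subgroup X) :
    numConjClasses H ^ 2 ≤ Nat.card X * numConjClasses X := by
  have h1 : numConjClasses H ≤ Nat.card H :=
    Nat.card_le_card_of_surjective _ ConjClasses.mk_surjective
  have h2 : Nat.card { p : H × H // Commute p.1 p.2 } ≤
      Nat.card { p : X × X // Commute p.1 p.2 } := by
    apply Nat.card_le_card_of_injective
      (fun p => ⟨((p.1.1 : X), (p.1.2 : X)), by
        have := p.2
        simpa [Commute, SemiconjBy, Subtype.ext_iff] using this⟩)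
    intro p q hpq
    simp only [Subtype.mk.injEq, Prod.mk.injEq] at hpq
    ext <;> simp [Prod.ext_iff, Subtype.ext_iff, hpq.1, hpq.2]
  have hH := card_comm_eq_card_conjClasses_mul_card H
  have hX := card_comm_eq_card_conjClasses_mul_card X
  calc numConjClasses H ^ 2 = numConjClasses H * numConjClasses H := sq _
    _ ≤ numConjClasses H * Nat.card H := Nat.mul_le_mul_left _ h1
    _ ≤ numConjClasses X * Nat.card X := by
        unfold numConjClasses; rw [← hH, ← hX]; exact h2
    _ = Nat.card X * numConjClasses X := mul_comm _ _
end

section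
/- Let H be a finite group and N an abelian normal subgroup of H such that H/N is cyclic. Let Irr(N) be the group of complex irreducible characters of N (homomorphisms from N to ℂ^×), with H acting on both N and Irr(N) by conjugation. Then there is a bijection between the set of H-orbits on Irr(N) and the set of H-orbits on N that preserves orbit sizes: for every positive integer s, the number of H-orbits of size s on Irr(N) equals the number of H-orbits of size s on N. -/
/-!
Let the image of `g ∈ H` generate `H ⧸ N`. As `N` acts trivially on both `N` and `Irr(N)`, every
`H`-orbit is a `⟨g⟩`-orbit and its size is the `g`-period of any of its points; hence the points
whose orbit size divides `k` are exactly the fixed points of `g ^ k`. For an endomorphism `φ` of a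
finite abelian group `A`, the characters with `χ ∘ φ = χ` are those trivial on the image of `φ / id`,
so there are `|A / im (φ / id)| = |ker (φ / id)|` of them, the number of fixed points of `φ`. Thus
both sets have equally many points of orbit size dividing `k`, for every `k`; Möbius inversion turns
this into equally many points of orbit size `s`, and these points fill `s`-element orbits.
-/

variable {H : Type*} [Group H] (N : Subgroup H) [N.Normal]

/-- Conjugation action of `H` on its normal subgroup `N`. -/
instance conjAction : MulAction H ↥N :=
  MulAction.compHom ↥N (MulAut.conjNormal : H →* MulAut ↥N)

lemma conjAction_smul_apply (h : H) (x : ↥N) :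
    ((h • x : ↥N) : H) = h * x * h⁻¹ := rfl

instance charConjSMul : SMul H (↥N →* ℂˣ) :=
  ⟨fun h χ => χ.comp (MulAut.conjNormal (h⁻¹ : H) : ↥N ≃* ↥N).toMonoidHom⟩

lemma charConjSMul_apply (h : H) (χ : ↥N →* ℂˣ) (x : ↥N) :
    (h • χ) x = χ (MulAut.conjNormal (h⁻¹ : H) x) := rfl

/-- Conjugation action of `H` on the complex irreducible characters
`Irr(N) = Hom(N, ℂ^×)` of its abelian normal subgroup `N`. -/
instance charConjAction : MulAction H (↥N →* ℂˣ) where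
  one_smul χ := by
    ext x
    rw [charConjSMul_apply]
    congr 1
    ext
    simp
  mul_smul g h χ := by
    ext x
    rw [charConjSMul_apply, charConjSMul_apply, charConjSMul_apply]
    congr 1
    ext
    simp [mul_assoc]

open MulAction Function

namespace Nat

theorem sum_divisors_card_eq_card_dvd {X : Type*} [Finite X] (u : X → ℕ) {k : ℕ} (hk : 0 < k) :
    ∑ d ∈ k.divisors, Nat.card {x // u x = d} = Nat.card {x // u x ∣ k} := by
  classical
  have := Fintype.ofFinite X
  simp only [Nat.card_eq_fintype_card, Fintype.card_subtype]
  rw [Finset.card_eq_sum_card_fiberwise (f := u) (t := k.divisors) fun x hx =>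
    Nat.mem_divisors.mpr ⟨(Finset.mem_filter.mp hx).2, hk.ne'⟩]
  refine Finset.sum_congr rfl fun d hd => congrArg Finset.card ?_
  ext x
  simp only [Finset.filter_filter, Finset.mem_filter, Finset.mem_univ, true_and]
  exact ⟨fun h => ⟨h ▸ (Nat.mem_divisors.mp hd).1, h⟩, And.right⟩

theorem card_eq_sum_moebius_smul_card_dvd {X : Type*} [Finite X] (u : X → ℕ) {s : ℕ}
    (hs : 0 < s) :
    (Nat.card {x // u x = s} : ℤ) = ∑ p ∈ s.divisorsAntidiagonal,
      ArithmeticFunction.moebius p.1 • (Nat.card {x // u x ∣ p.2} : ℤ) :=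
  ((ArithmeticFunction.sum_eq_iff_sum_smul_moebius_eq (f := fun d => (Nat.card {x // u x = d} : ℤ))
    (g := fun k => (Nat.card {x // u x ∣ k} : ℤ))).mp
    (fun k hk => by exact_mod_cast sum_divisors_card_eq_card_dvd u hk) s hs).symm

theorem card_eq_of_forall_card_dvd_eq {X Y : Type*} [Finite X] [Finite Y] (u : X → ℕ)
    (v : Y → ℕ) (h : ∀ k, 0 < k → Nat.card {x // u x ∣ k} = Nat.card {y // v y ∣ k})
    {s : ℕ} (hs : 0 < s) : Nat.card {x // u x = s} = Nat.card {y // v y = s} := by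
  rw [← Nat.cast_inj (R := ℤ), card_eq_sum_moebius_smul_card_dvd u hs,
    card_eq_sum_moebius_smul_card_dvd v hs]
  refine Finset.sum_congr rfl fun p hp => ?_
  rw [h p.2 (Nat.pos_of_mem_divisors (Nat.snd_mem_divisors_of_mem_antidiagonal hp))]

end Nat

namespace MulAction

variable {G X : Type*} [Group G] [MulAction G X]

theorem card_orbit_ne_zero [Finite X] (x : X) : Nat.card (orbit G x) ≠ 0 :=
  have : Nonempty (orbit G x) := ⟨⟨x, mem_orbit_self x⟩⟩
  Nat.card_pos.ne'

theorem card_subtype_card_orbit_eq_mul [Finite X] (s : ℕ) :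
    Nat.card {x : X // Nat.card (orbit G x) = s} =
      s * Nat.card {ω : Quotient (orbitRel G X) // Nat.card (orbit G ω.out) = s} := by
  have horbit (x : X) : orbit G (Quotient.mk (orbitRel G X) x).out = orbit G x :=
    orbit_eq_iff.mpr (orbitRel_apply.mp (Quotient.mk_out x))
  have hfiber (ω : Quotient (orbitRel G X)) :
      Nat.card {x // Quotient.mk _ x = ω} = Nat.card (orbit G ω.out) := by
    rw [← orbitRel.Quotient.orbit_eq_orbit_out ω Quotient.out_eq']
    exact Nat.card_congr (Equiv.subtypeEquivRight fun x => orbitRel.Quotient.mem_orbit.symm)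
  have := Fintype.ofFinite (Quotient (orbitRel G X))
  rw [← Nat.card_congr (Equiv.sigmaSubtypeFiberEquivSubtype (Quotient.mk _)
    (q := fun ω => Nat.card (orbit G ω.out) = s) fun x => by rw [horbit]), Nat.card_sigma,
    Finset.sum_congr rfl fun ω _ => (hfiber ω.1).trans ω.2, Finset.sum_const, smul_eq_mul,
    Finset.card_univ, Nat.card_eq_fintype_card, mul_comm]

theorem orbit_zpowers_eq_orbit {N : Subgroup G} [N.Normal] (hN : ∀ n ∈ N, ∀ x : X, n • x = x)
    {g : G} (hg : ∀ q : G ⧸ N, q ∈ Subgroup.zpowers (g : G ⧸ N)) (x : X) :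
    orbit (Subgroup.zpowers g) x = orbit G x := by
  refine Set.Subset.antisymm (fun _ ⟨h, hh⟩ => ⟨h, hh⟩) ?_
  rintro _ ⟨h, rfl⟩
  obtain ⟨m, hm⟩ := hg h
  have hn : (g ^ m)⁻¹ * h ∈ N := QuotientGroup.eq.mp (by simpa using hm)
  refine ⟨⟨g ^ m, Subgroup.zpow_mem_zpowers g m⟩, ?_⟩
  change g ^ m • x = h • x
  rw [← mul_inv_cancel_left (g ^ m) h, mul_smul, hN _ hn]

theorem card_orbit_eq_minimalPeriod [Finite X] {N : Subgroup G} [N.Normal]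
    (hN : ∀ n ∈ N, ∀ x : X, n • x = x) {g : G}
    (hg : ∀ q : G ⧸ N, q ∈ Subgroup.zpowers (g : G ⧸ N)) (x : X) :
    Nat.card (orbit G x) = minimalPeriod (g • ·) x := by
  have := Fintype.ofFinite (orbit (Subgroup.zpowers g) x)
  rw [← orbit_zpowers_eq_orbit hN hg, Nat.card_eq_fintype_card, minimalPeriod_eq_card]

theorem card_subtype_card_orbit_dvd_eq_card_fixedBy_pow [Finite X] {N : Subgroup G} [N.Normal]
    (hN : ∀ n ∈ N, ∀ x : X, n • x = x) {g : G}
    (hg : ∀ q : G ⧸ N, q ∈ Subgroup.zpowers (g : G ⧸ N)) (k : ℕ) :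
    Nat.card {x : X // Nat.card (orbit G x) ∣ k} = Nat.card (fixedBy X (g ^ k)) :=
  Nat.card_congr <| Equiv.subtypeEquivRight fun x => by
    rw [card_orbit_eq_minimalPeriod hN hg, mem_fixedBy, pow_smul_eq_iff_minimalPeriod_dvd]

theorem card_orbits_eq_of_card_fixedBy_eq {Y : Type*} [MulAction G Y] [Finite X] [Finite Y]
    (N : Subgroup G) [N.Normal] (hX : ∀ n ∈ N, ∀ x : X, n • x = x)
    (hY : ∀ n ∈ N, ∀ y : Y, n • y = y) (hcyc : IsCyclic (G ⧸ N))
    (hfix : ∀ g : G, Nat.card (fixedBy X g) = Nat.card (fixedBy Y g)) (s : ℕ) :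
    Nat.card {ω : Quotient (orbitRel G X) // Nat.card (orbit G ω.out) = s} =
      Nat.card {ω : Quotient (orbitRel G Y) // Nat.card (orbit G ω.out) = s} := by
  obtain ⟨c, hc⟩ := hcyc
  obtain ⟨g, rfl⟩ := QuotientGroup.mk_surjective c
  rcases Nat.eq_zero_or_pos s with rfl | hs
  · simp only [card_orbit_ne_zero, Nat.card_of_isEmpty]
  refine Nat.eq_of_mul_eq_mul_left hs ?_
  rw [← card_subtype_card_orbit_eq_mul, ← card_subtype_card_orbit_eq_mul]
  refine Nat.card_eq_of_forall_card_dvd_eq _ _ (fun k _ => ?_) hs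
  rw [card_subtype_card_orbit_dvd_eq_card_fixedBy_pow hX hc,
    card_subtype_card_orbit_dvd_eq_card_fixedBy_pow hY hc, hfix]

end MulAction

namespace CommGroup

theorem card_fixedPoints_comp_eq_card_fixedPoints {A M : Type*} [CommGroup A] [Finite A]
    [CommMonoid M] [HasEnoughRootsOfUnity M (Monoid.exponent A)] (φ : A →* A) :
    Nat.card (fixedPoints fun χ : A →* Mˣ => χ.comp φ) = Nat.card (fixedPoints φ) := by
  set f := φ / MonoidHom.id A
  have hchar : Nat.card (fixedPoints fun χ : A →* Mˣ => χ.comp φ) =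
      Nat.card (MonoidHom.domRestrictHom f.range Mˣ).ker := by
    refine Nat.card_congr (Equiv.subtypeEquivRight fun χ => ?_)
    rw [Function.mem_fixedPoints, IsFixedPt, MonoidHom.mem_ker, MonoidHom.domRestrictHom_apply,
      MonoidHom.domRestrict_eq_one_iff, MonoidHom.ext_iff]
    simp only [MonoidHom.comp_apply, MonoidHom.mem_range, forall_exists_index,
      forall_apply_eq_imp_iff, f, MonoidHom.div_apply, MonoidHom.id_apply, map_div, div_eq_one]
  have hpoints : Nat.card (fixedPoints φ) = Nat.card f.ker :=
    Nat.card_congr <| Equiv.subtypeEquivRight fun a => by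
      simp only [Function.mem_fixedPoints, IsFixedPt, MonoidHom.mem_ker, f, MonoidHom.div_apply,
        MonoidHom.id_apply, div_eq_one]
  rw [hchar, card_domRestrictHom_ker, ← Subgroup.index, Subgroup.index_range, hpoints]

end CommGroup

open scoped IsMulCommutative

variable {N} in
theorem conjNormal_apply_eq_self [IsMulCommutative ↥N] {n : H} (hn : n ∈ N) (x : N) :
    MulAut.conjNormal n x = x :=
  Subtype.ext <| by
    rw [MulAut.conjNormal_apply, mul_inv_eq_iff_eq_mul]
    exact congrArg Subtype.val (mul_comm (⟨n, hn⟩ : N) x)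

theorem card_fixedBy_monoidHom_eq_card_fixedBy [IsMulCommutative ↥N] [Finite N] (h : H) :
    Nat.card (fixedBy (N →* ℂˣ) h) = Nat.card (fixedBy N h) := by
  rw [← fixedBy_inv (↥N) h]
  exact CommGroup.card_fixedPoints_comp_eq_card_fixedPoints (M := ℂ)
    (MulAut.conjNormal (h⁻¹ : H) : N ≃* N).toMonoidHom

/-- **Size-preserving bijection between orbits on `Irr(N)` and on `N`.**
If `N` is an abelian normal subgroup of a finite group `H` with `H/N` cyclic, then for every
`s` the number of `H`-orbits of size `s` on `Irr(N) = Hom(N, ℂ^×)` equals the number of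
`H`-orbits of size `s` on `N`. -/
theorem card_orbits_char_eq_card_orbits_of_cyclic_quotient
    [Finite H] (hN : ∀ x y : ↥N, x * y = y * x) (hcyc : IsCyclic (H ⧸ N)) (s : ℕ) :
    Nat.card {ω : Quotient (MulAction.orbitRel H (↥N →* ℂˣ)) //
        Nat.card (MulAction.orbit H ω.out) = s} =
      Nat.card {ω : Quotient (MulAction.orbitRel H ↥N) //
        Nat.card (MulAction.orbit H ω.out) = s} := by
  have : IsMulCommutative ↥N := ⟨⟨hN⟩⟩
  have : Finite (N →* ℂˣ) :=
    .of_equiv _ (CommGroup.monoidHom_mulEquiv_of_hasEnoughRootsOfUnity N ℂ).some.symm.toEquiv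
  refine card_orbits_eq_of_card_fixedBy_eq N (fun n hn χ => ?_) (fun n hn x => ?_) hcyc
    (card_fixedBy_monoidHom_eq_card_fixedBy N) s
  · exact MonoidHom.ext fun x => congrArg χ (conjNormal_apply_eq_self (inv_mem hn) x)
  · exact conjNormal_apply_eq_self hn x
end

section
/- Let p be a prime, n a positive integer, and V = 𝔽_{p^n} regarded as an n-dimensional vector space over 𝔽_p. Let S be the cyclic group of multiplications by elements of 𝔽_{p^n}^× and let X = ΓL(1,p^n) be the group generated by S and the Frobenius map v ↦ v^p. Let G ≤ X, let d = |G : S ∩ G|, assume d > 1, and let q be the smallest prime divisor of d. Then for every non-identity element g ∈ G, the fixed-point set C_V(g) = {v ∈ V : g(v) = v} satisfies |C_V(g)| ≤ |V|^{1/q} = p^{n/q}. -/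
variable (p n : ℕ) [Fact p.Prime]

/-- Multiplications by nonzero field elements, as linear automorphisms of `𝔽_{p^n}`
over `𝔽_p`; this is the cyclic subgroup `S = GL(1, p^n)`. -/
noncomputable def scalarSubgroup : Subgroup (GaloisField p n ≃ₗ[ZMod p] GaloisField p n) :=
  (DistribMulAction.toModuleAut (ZMod p) (GaloisField p n) :
    (GaloisField p n)ˣ →* _).range

/-- The Frobenius map `v ↦ v^p` as an `𝔽_p`-linear automorphism of `𝔽_{p^n}`. -/
noncomputable def frobLin : GaloisField p n ≃ₗ[ZMod p] GaloisField p n :=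
  (frobeniusEquiv (GaloisField p n) p).toAddEquiv.toLinearEquiv (by
    intro c v
    show frobeniusEquiv (GaloisField p n) p (c • v) = c • frobeniusEquiv (GaloisField p n) p v
    simp only [frobeniusEquiv_def, Algebra.smul_def, mul_pow, ← map_pow, ZMod.pow_card])

/-- The group `X = ΓL(1, p^n)`, generated by the multiplications by nonzero field elements
together with the Frobenius map `v ↦ v^p`. -/
noncomputable def gammaL : Subgroup (GaloisField p n ≃ₗ[ZMod p] GaloisField p n) :=
  scalarSubgroup p n ⊔ Subgroup.closure {frobLin p n}

/-!
Every element of `ΓL(1, p^n)` acts as `v ↦ c * v ^ p ^ j`. If such a `g` fixes some `w ≠ 0`,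
then `v ↦ v / w` embeds its fixed points into the fixed field of `v ↦ v ^ p ^ j`, which has
`p ^ e` elements for `e = gcd(n, j)`. As `S ∩ G` is normal in `G`, the image of `g` in
`G / (S ∩ G)` has some order `t ∣ d`, and `g ^ t ∈ S` forces `n ∣ j t`, i.e. `n / e ∣ t`.
If `n / e = 1` then `g` is a scalar fixing `w`, so `g = 1`; otherwise `q ≤ n / e`, so
`e ≤ n / q`.
-/

open Function Polynomial

theorem isPeriodicPt_frobenius_iff {R : Type*} [CommSemiring R] {p : ℕ} [ExpChar R p] {k : ℕ}
    {u : R} : IsPeriodicPt (frobenius R p) k u ↔ u ^ p ^ k = u := by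
  rw [IsPeriodicPt, IsFixedPt, iterate_frobenius]

theorem card_pow_eq_self_le {R : Type*} [CommRing R] [IsDomain R] {m : ℕ} (hm : 1 < m) :
    Nat.card {u : R // u ^ m = u} ≤ m := by
  have hdeg : (X ^ m - X : R[X]).natDegree = m := by
    rw [natDegree_sub_eq_left_of_natDegree_lt] <;> simp [hm]
  have hX : (X ^ m - X : R[X]) ≠ 0 := ne_zero_of_natDegree_gt (hdeg ▸ hm)
  calc Nat.card {u : R // u ^ m = u} = ((X ^ m - X : R[X]).rootSet R).ncard := by
        rw [← Nat.card_coe_set_eq]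
        congr; ext u
        simp [mem_rootSet, hX, sub_eq_zero]
    _ ≤ (X ^ m - X : R[X]).natDegree := ncard_rootSet_le _ _
    _ = m := hdeg

theorem card_fixedPoints_mul_pow_le {F : Type*} [Field F] [Finite F] {c w : F} {m : ℕ}
    (hw0 : w ≠ 0) (hw : c * w ^ m = w) :
    Nat.card {v : F // c * v ^ m = v} ≤ Nat.card {u : F // u ^ m = u} := by
  have hc : c ≠ 0 := by rintro rfl; simp [eq_comm, hw0] at hw
  refine Nat.card_le_card_of_injective (fun v ↦ ⟨v / w, ?_⟩) fun v v' h ↦ ?_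
  · rw [div_pow, ← mul_div_mul_left _ _ hc, v.2, hw]
  · exact Subtype.ext ((div_left_inj' hw0).1 (congrArg Subtype.val h))

theorem gcd_le_div_minFac_of_div_gcd_dvd {n j d : ℕ} (hn : 0 < n) (hnj : ¬n ∣ j)
    (hd : n / n.gcd j ∣ d) : n.gcd j ≤ n / d.minFac := by
  have hgcd : n.gcd j ∣ n := Nat.gcd_dvd_left n j
  have hm : 1 < n / n.gcd j :=
    lt_of_le_of_ne (Nat.div_pos (Nat.le_of_dvd hn hgcd) (Nat.gcd_pos_of_pos_left j hn))
      fun h ↦ hnj (Nat.gcd_eq_left_iff_dvd.1 (Nat.eq_of_dvd_of_div_eq_one hgcd h.symm))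
  calc n.gcd j = n / (n / n.gcd j) := (Nat.div_div_self hgcd hn.ne').symm
    _ ≤ n / d.minFac := Nat.div_le_div_left (Nat.minFac_le_of_dvd hm hd) d.minFac_pos

section GaloisField

variable {p n : ℕ} [Fact p.Prime]

local notation "K" => GaloisField p n

theorem isPeriodicPt_frobenius_galoisField (hn : n ≠ 0) (v : K) :
    IsPeriodicPt (frobenius K p) n v := by
  have := Fintype.ofFinite K
  rw [isPeriodicPt_frobenius_iff, ← GaloisField.card p n hn, Nat.card_eq_fintype_card]
  exact FiniteField.pow_card v

theorem pow_pow_gcd_eq_self (hn : n ≠ 0) {j : ℕ} {u : K} (hu : u ^ p ^ j = u) :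
    u ^ p ^ n.gcd j = u :=
  isPeriodicPt_frobenius_iff.1 <|
    (isPeriodicPt_frobenius_galoisField hn u).gcd (isPeriodicPt_frobenius_iff.2 hu)

theorem pow_pow_eq_self_of_dvd (hn : n ≠ 0) {j : ℕ} (hnj : n ∣ j) (v : K) :
    v ^ p ^ j = v := by
  obtain ⟨k, rfl⟩ := hnj
  exact isPeriodicPt_frobenius_iff.1 ((isPeriodicPt_frobenius_galoisField hn v).mul_const k)

theorem card_pow_pow_eq_self_le (hn : n ≠ 0) (j : ℕ) :
    Nat.card {u : K // u ^ p ^ j = u} ≤ p ^ n.gcd j :=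
  calc Nat.card {u : K // u ^ p ^ j = u}
      ≤ Nat.card {u : K // u ^ p ^ n.gcd j = u} :=
        Nat.card_le_card_of_injective _
          (Subtype.impEmbedding _ _ fun _ ↦ pow_pow_gcd_eq_self hn).injective
    _ ≤ p ^ n.gcd j := card_pow_eq_self_le <|
        Nat.one_lt_pow (Nat.gcd_pos_of_pos_left j (Nat.pos_of_ne_zero hn)).ne'
          (Fact.out : p.Prime).one_lt

theorem dvd_of_forall_pow_pow_eq_self (hn : n ≠ 0) {k : ℕ} (h : ∀ v : K, v ^ p ^ k = v) :
    n ∣ k := by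
  have hφ : FiniteField.frobeniusAlgEquivOfAlgebraic (ZMod p) K ^ k = 1 := by
    ext v
    simp [AlgEquiv.coe_pow, FiniteField.coe_frobeniusAlgEquivOfAlgebraic_iterate, h]
  simpa [FiniteField.orderOf_frobeniusAlgEquivOfAlgebraic, GaloisField.finrank p hn] using
    orderOf_dvd_of_pow_eq_one hφ

theorem mul_apply_eq_mul_pow {x y : K ≃ₗ[ZMod p] K} {a b : K} {j k : ℕ}
    (hx : ∀ v, x v = a * v ^ p ^ j) (hy : ∀ v, y v = b * v ^ p ^ k) (v : K) :
    (x * y) v = a * b ^ p ^ j * v ^ p ^ (j + k) := by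
  rw [LinearEquiv.mul_apply, hy, hx, mul_pow, ← pow_mul', ← pow_add, mul_assoc]

theorem exists_pow_apply_eq_mul_pow {x : K ≃ₗ[ZMod p] K} {c : K} {j : ℕ}
    (hx : ∀ v, x v = c * v ^ p ^ j) (t : ℕ) :
    ∃ c' : K, ∀ v, (x ^ t) v = c' * v ^ p ^ (j * t) := by
  induction t with
  | zero => exact ⟨1, by simp⟩
  | succ t ih =>
    obtain ⟨c', hc'⟩ := ih
    exact ⟨_, fun v ↦ by rw [pow_succ', mul_apply_eq_mul_pow hx hc', mul_add_one, add_comm]⟩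

theorem exists_apply_eq_mul_pow_of_mem_gammaL {x : K ≃ₗ[ZMod p] K} (hx : x ∈ gammaL p n) :
    ∃ (c : K) (j : ℕ), ∀ v, x v = c * v ^ p ^ j := by
  have : Finite (K ≃ₗ[ZMod p] K) := Finite.of_injective _ DFunLike.coe_injective
  rw [gammaL, ← (scalarSubgroup p n).closure_eq, ← Subgroup.closure_union,
    ← Subgroup.mem_toSubmonoid, Subgroup.closure_toSubmonoid_of_finite] at hx
  induction hx using Submonoid.closure_induction with
  | mem x hx =>
    rcases hx with ⟨a, rfl⟩ | rfl
    · exact ⟨a, 0, fun v ↦ by simp [Units.smul_def]⟩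
    · exact ⟨1, 1, fun v ↦ by simp [frobLin, frobenius_def]⟩
  | one => exact ⟨1, 0, by simp⟩
  | mul x y _ _ hx hy =>
    obtain ⟨a, j, hx⟩ := hx
    obtain ⟨b, k, hy⟩ := hy
    exact ⟨_, _, mul_apply_eq_mul_pow hx hy⟩

theorem dvd_of_mem_scalarSubgroup (hn : n ≠ 0) {x : K ≃ₗ[ZMod p] K}
    (hx : x ∈ scalarSubgroup p n) {c : K} {k : ℕ} (hxk : ∀ v, x v = c * v ^ p ^ k) :
    n ∣ k := by
  obtain ⟨a, rfl⟩ := hx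
  have hav (v : K) : a * v = c * v ^ p ^ k := by simpa [Units.smul_def] using hxk v
  have hac : (a : K) = c := by simpa using hav 1
  refine dvd_of_forall_pow_pow_eq_self (p := p) hn fun v ↦ ?_
  rw [← hac] at hav
  exact (mul_left_cancel₀ a.ne_zero (hav v)).symm

theorem conj_mem_scalarSubgroup {x s : K ≃ₗ[ZMod p] K} (hx : x ∈ gammaL p n)
    (hs : s ∈ scalarSubgroup p n) : x * s * x⁻¹ ∈ scalarSubgroup p n := by
  obtain ⟨c, j, hxj⟩ := exists_apply_eq_mul_pow_of_mem_gammaL hx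
  obtain ⟨a, rfl⟩ := hs
  have hcomm : x * DistribMulAction.toModuleAut (ZMod p) K a =
      DistribMulAction.toModuleAut (ZMod p) K (a ^ p ^ j) * x := by
    ext v
    simp only [DistribMulAction.toModuleAut_apply, LinearEquiv.mul_apply,
      DistribMulAction.toLinearEquiv_apply, Units.smul_def, smul_eq_mul, hxj, mul_pow,
      Units.val_pow_eq_pow_val]
    ring
  rw [hcomm, mul_inv_cancel_right]
  exact ⟨_, rfl⟩

theorem scalarSubgroup_subgroupOf_normal {G : Subgroup (K ≃ₗ[ZMod p] K)}
    (hG : G ≤ gammaL p n) : ((scalarSubgroup p n).subgroupOf G).Normal :=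
  ⟨fun _ hs g ↦ conj_mem_scalarSubgroup (hG g.2) hs⟩

theorem div_gcd_dvd_relIndex (hn : n ≠ 0) {G : Subgroup (K ≃ₗ[ZMod p] K)}
    (hG : G ≤ gammaL p n) {g : G} {c : K} {j : ℕ}
    (hgj : ∀ v, (g : K ≃ₗ[ZMod p] K) v = c * v ^ p ^ j) :
    n / n.gcd j ∣ (scalarSubgroup p n).relIndex G := by
  have := scalarSubgroup_subgroupOf_normal hG
  set t := orderOf (g : G ⧸ (scalarSubgroup p n).subgroupOf G)
  have hgt : g ^ t ∈ (scalarSubgroup p n).subgroupOf G := by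
    rw [← QuotientGroup.eq_one_iff, QuotientGroup.mk_pow, pow_orderOf_eq_one]
  obtain ⟨c', hc'⟩ := exists_pow_apply_eq_mul_pow hgj t
  have hnjt : n ∣ j * t := dvd_of_mem_scalarSubgroup hn (Subgroup.mem_subgroupOf.1 hgt) hc'
  have ht : n / n.gcd j ∣ t := by
    rw [← ZMod.addOrderOf_coe j hn, addOrderOf_dvd_iff_nsmul_eq_zero, nsmul_eq_mul, mul_comm,
      ← Nat.cast_mul, ZMod.natCast_eq_zero_iff]
    exact hnjt
  exact ht.trans (orderOf_dvd_natCard _)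

theorem eq_one_of_apply_eq_mul_pow_of_dvd (hn : n ≠ 0) {x : K ≃ₗ[ZMod p] K} {c w : K}
    {j : ℕ} (hxj : ∀ v, x v = c * v ^ p ^ j) (hnj : n ∣ j) (hw0 : w ≠ 0) (hw : x w = w) :
    x = 1 := by
  have hx (v : K) : x v = c * v := by rw [hxj, pow_pow_eq_self_of_dvd hn hnj]
  have hc : c = 1 := (mul_eq_right₀ hw0).1 (hx w ▸ hw)
  ext v
  simp [hx, hc]

end GaloisField

theorem card_fixedPoints_le (hn : 0 < n)
    (G : Subgroup (GaloisField p n ≃ₗ[ZMod p] GaloisField p n)) (hG : G ≤ gammaL p n)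
    (d : ℕ) (hd : d = (scalarSubgroup p n).relIndex G)
    (g : G) (hg : g ≠ 1) :
    Nat.card {v : GaloisField p n // (g : GaloisField p n ≃ₗ[ZMod p] GaloisField p n) v = v} ≤
      p ^ (n / d.minFac) := by
  have hp := (Fact.out : p.Prime).pos
  obtain ⟨c, j, hgj⟩ := exists_apply_eq_mul_pow_of_mem_gammaL (hG g.2)
  have hdvd : n / n.gcd j ∣ d := hd ▸ div_gcd_dvd_relIndex hn.ne' hG hgj
  by_cases hfix : ∀ v, (g : GaloisField p n ≃ₗ[ZMod p] GaloisField p n) v = v → v = 0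
  · have : Subsingleton {v // (g : GaloisField p n ≃ₗ[ZMod p] GaloisField p n) v = v} :=
      ⟨fun v v' ↦ Subtype.ext ((hfix v v.2).trans (hfix v' v'.2).symm)⟩
    exact (Finite.card_le_one_iff_subsingleton.2 this).trans (Nat.one_le_pow _ _ hp)
  push Not at hfix
  obtain ⟨w, hw, hw0⟩ := hfix
  have hnj : ¬n ∣ j := fun hnj ↦
    hg (Subtype.ext (eq_one_of_apply_eq_mul_pow_of_dvd hn.ne' hgj hnj hw0 hw))
  simp only [hgj] at hw ⊢
  calc _ ≤ Nat.card {u : GaloisField p n // u ^ p ^ j = u} := card_fixedPoints_mul_pow_le hw0 hw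
    _ ≤ p ^ n.gcd j := card_pow_pow_eq_self_le hn.ne' j
    _ ≤ p ^ (n / d.minFac) :=
      Nat.pow_le_pow_right hp (gcd_le_div_minFac_of_div_gcd_dvd hn hnj hdvd)
end

section
/- Let t be a positive integer, let H₁, …, H_t be finite groups, and let H be a subgroup of the direct product H₁ × ⋯ × H_t whose projection onto each factor H_i is surjective (a subdirect product). Let c be a positive real number such that k(N) < c for every index i and every normal subgroup N of H_i. Then k(H) < c^t. -/
/-!
Counting commuting pairs, `k(G) · |G| = #{(x, y) | x y = y x}`. Reducing a commuting pair of `G`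
modulo a normal subgroup `N` gives a commuting pair of `G ⧸ N`, and each fibre of this map has at
most as many elements as there are commuting pairs in `N`: a coset of `N` meets the centralizer of
any element in at most `|C_N(x)|` elements. This gives Nagao's inequality `k(G) ≤ k(N) · k(G ⧸ N)`.

For a subdirect product `P ≤ H₁ × ⋯ × H_t`, apply it to the kernel `K` of the projection of `P`
onto the first `t - 1` factors. The image of that projection is again a subdirect product, and the
projection onto `H_t` embeds `K` as a normal subgroup of `H_t`, so `k(K) < c`; induct on `t`.
-/

theorem numConjClasses_congr {G G' : Type*} [Group G] [Group G'] (e : G ≃* G') :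
    numConjClasses G = numConjClasses G' :=
  Nat.card_congr <| Quotient.congr e.toEquiv fun a b => show IsConj a b ↔ IsConj (e a) (e b) from
    ⟨e.toMonoidHom.map_isConj, fun h => by simpa using e.symm.toMonoidHom.map_isConj h⟩

theorem numConjClasses_pos (G : Type*) [Group G] [Finite G] : 0 < numConjClasses G :=
  Nat.card_pos

namespace Subgroup

variable {G : Type*} [Group G] [Finite G] (N : Subgroup G)

theorem card_commute_mem_coset_le (x : G) (a : G ⧸ N) :
    Nat.card {y : G // (y : G ⧸ N) = a ∧ Commute x y} ≤ Nat.card {n : N // Commute x n} := by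
  rcases isEmpty_or_nonempty {y : G // (y : G ⧸ N) = a ∧ Commute x y} with h | ⟨⟨y₀, hy₀a, hy₀x⟩⟩
  · simp
  refine Nat.card_le_card_of_injective (fun y => ⟨⟨y₀⁻¹ * y,
    QuotientGroup.eq.mp (hy₀a.trans y.2.1.symm)⟩, hy₀x.inv_right.mul_right y.2.2⟩) fun y z h => ?_
  exact Subtype.ext (mul_left_cancel (congrArg (fun n : {n : N // Commute x n} => (n.1 : G)) h))

theorem card_commute_prod_coset_le {X : Type*} [Finite X] (f : X → G) (a : G ⧸ N) :
    Nat.card {p : X × G // (p.2 : G ⧸ N) = a ∧ Commute (f p.1) p.2} ≤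
      Nat.card {p : X × N // Commute (f p.1) p.2} := by
  have := Fintype.ofFinite X
  rw [Nat.card_congr (Equiv.subtypeProdEquivSigmaSubtype fun x (y : G) =>
      (y : G ⧸ N) = a ∧ Commute (f x) y),
    Nat.card_congr (Equiv.subtypeProdEquivSigmaSubtype fun x (n : N) => Commute (f x) n),
    Nat.card_sigma, Nat.card_sigma]
  exact Finset.sum_le_sum fun x _ => N.card_commute_mem_coset_le (f x) a

theorem card_commute_coset_prod_coset_le (a b : G ⧸ N) :
    Nat.card {p : G × G // ((p.1 : G ⧸ N) = a ∧ (p.2 : G ⧸ N) = b) ∧ Commute p.1 p.2} ≤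
      Nat.card {p : N × N // Commute p.1 p.2} := calc
  _ = Nat.card {p : {x : G // (x : G ⧸ N) = a} × G // (p.2 : G ⧸ N) = b ∧ Commute p.1.1 p.2} :=
    Nat.card_congr
      { toFun p := ⟨(⟨p.1.1, p.2.1.1⟩, p.1.2), p.2.1.2, p.2.2⟩
        invFun p := ⟨(p.1.1.1, p.1.2), ⟨p.1.1.2, p.2.1⟩, p.2.2⟩ }
  _ ≤ Nat.card {p : {x : G // (x : G ⧸ N) = a} × N // Commute p.1.1 p.2} :=
    N.card_commute_prod_coset_le _ b
  _ = Nat.card {p : N × G // (p.2 : G ⧸ N) = a ∧ Commute (p.1 : G) p.2} :=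
    Nat.card_congr
      { toFun p := ⟨(p.1.2, p.1.1.1), p.1.1.2, p.2.symm⟩
        invFun p := ⟨(⟨p.1.2, p.2.1⟩, p.1.1), p.2.2.symm⟩ }
  _ ≤ Nat.card {p : N × N // Commute (p.1 : G) p.2} := N.card_commute_prod_coset_le _ a
  _ = Nat.card {p : N × N // Commute p.1 p.2} :=
    Nat.card_congr (Equiv.subtypeEquivRight fun _ => Submonoid.commute_coe_coe)

theorem card_commute_le_mul_quotient [N.Normal] :
    Nat.card {p : G × G // Commute p.1 p.2} ≤
      Nat.card {p : N × N // Commute p.1 p.2} *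
        Nat.card {p : (G ⧸ N) × (G ⧸ N) // Commute p.1 p.2} := by
  have := Fintype.ofFinite {p : (G ⧸ N) × (G ⧸ N) // Commute p.1 p.2}
  let π (p : {p : G × G // Commute p.1 p.2}) : {p : (G ⧸ N) × (G ⧸ N) // Commute p.1 p.2} :=
    ⟨((p.1.1 : G ⧸ N), (p.1.2 : G ⧸ N)), p.2.map (QuotientGroup.mk' N)⟩
  have fiber_le (d) : Nat.card {p // π p = d} ≤ Nat.card {p : N × N // Commute p.1 p.2} := by
    refine le_of_eq_of_le (Nat.card_congr ?_) (N.card_commute_coset_prod_coset_le d.1.1 d.1.2)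
    exact (Equiv.subtypeEquivRight fun _ => Subtype.ext_iff).trans
      ((Equiv.subtypeSubtypeEquivSubtypeInter _
        fun p : G × G => ((p.1 : G ⧸ N), (p.2 : G ⧸ N)) = d.1).trans
      (Equiv.subtypeEquivRight fun _ => by rw [Prod.ext_iff, and_comm]))
  calc Nat.card {p : G × G // Commute p.1 p.2}
      = ∑ d, Nat.card {p // π p = d} := by
        rw [← Nat.card_sigma]; exact Nat.card_congr (Equiv.sigmaFiberEquiv π).symm
    _ ≤ ∑ _d, Nat.card {p : N × N // Commute p.1 p.2} := Finset.sum_le_sum fun d _ => fiber_le d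
    _ = _ := by simp [mul_comm]

theorem numConjClasses_le_mul_quotient [N.Normal] :
    numConjClasses G ≤ numConjClasses N * numConjClasses (G ⧸ N) := by
  unfold numConjClasses
  have key := N.card_commute_le_mul_quotient
  rw [card_comm_eq_card_conjClasses_mul_card, card_comm_eq_card_conjClasses_mul_card,
    card_comm_eq_card_conjClasses_mul_card, N.card_eq_card_quotient_mul_card_subgroup] at key
  refine Nat.le_of_mul_le_mul_right (c := Nat.card (G ⧸ N) * Nat.card N) ?_ ?_
  · exact key.trans_eq (by ring)
  · rw [← N.card_eq_card_quotient_mul_card_subgroup]; exact Nat.card_pos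

end Subgroup

theorem numConjClasses_le_ker_mul_range {G G' : Type*} [Group G] [Finite G] [Group G']
    (f : G →* G') : numConjClasses G ≤ numConjClasses f.ker * numConjClasses f.range :=
  numConjClasses_congr (QuotientGroup.quotientKerEquivRange f) ▸
    f.ker.numConjClasses_le_mul_quotient

theorem exists_normal_numConjClasses_ker_eq {G A B : Type*} [Group G] [Group A] [Group B]
    (ρ : G →* A) (π : G →* B) (hπ : Function.Surjective π)
    (hρπ : ∀ x, ρ x = 1 → π x = 1 → x = 1) :
    ∃ N : Subgroup B, N.Normal ∧ numConjClasses ρ.ker = numConjClasses N := by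
  have hinj : Function.Injective (π.subgroupMap ρ.ker) :=
    (injective_iff_map_eq_one _).2 fun x hx =>
      Subtype.ext (hρπ x x.2 (congrArg Subtype.val hx))
  exact ⟨ρ.ker.map π, ρ.normal_ker.map π hπ, numConjClasses_congr
    (MulEquiv.ofBijective _ ⟨hinj, π.subgroupMap_surjective ρ.ker⟩)⟩

def IsSubdirectProduct {ι : Type*} {H : ι → Type*} [∀ i, Group (H i)]
    (P : Subgroup (∀ i, H i)) : Prop :=
  ∀ i, Function.Surjective fun h : P => (h : ∀ j, H j) i

namespace IsSubdirectProduct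

theorem range_restrict {ι κ : Type*} {H : ι → Type*} [∀ i, Group (H i)]
    {P : Subgroup (∀ i, H i)} (hP : IsSubdirectProduct P) (e : κ → ι) :
    IsSubdirectProduct ((MonoidHom.pi fun k => Pi.evalMonoidHom H (e k)).comp P.subtype).range :=
  fun k a =>
    let ⟨p, hp⟩ := hP (e k) a
    ⟨⟨_, p, rfl⟩, hp⟩

theorem exists_numConjClasses_le_mul {n : ℕ} {H : Fin (n + 1) → Type*} [∀ i, Group (H i)]
    [∀ i, Finite (H i)] {P : Subgroup (∀ i, H i)} (hP : IsSubdirectProduct P) :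
    ∃ Q : Subgroup (∀ i : Fin n, H i.castSucc), IsSubdirectProduct Q ∧
      ∃ N : Subgroup (H (Fin.last n)), N.Normal ∧
        numConjClasses P ≤ numConjClasses N * numConjClasses Q := by
  let ρ := (MonoidHom.pi fun i : Fin n => Pi.evalMonoidHom H i.castSucc).comp P.subtype
  obtain ⟨N, hN, hkN⟩ := exists_normal_numConjClasses_ker_eq ρ
    ((Pi.evalMonoidHom H (Fin.last n)).comp P.subtype) (hP (Fin.last n))
    fun x hρ hlast => Subtype.ext <| funext <| Fin.lastCases hlast fun i => congrFun hρ i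
  exact ⟨ρ.range, hP.range_restrict _, N, hN, hkN ▸ numConjClasses_le_ker_mul_range ρ⟩

theorem numConjClasses_le_pow {c : ℝ} (hc : 0 ≤ c) (n : ℕ) {H : Fin n → Type*}
    [∀ i, Group (H i)] [∀ i, Finite (H i)] {P : Subgroup (∀ i, H i)} (hP : IsSubdirectProduct P)
    (hk : ∀ i (N : Subgroup (H i)), N.Normal → (numConjClasses N : ℝ) ≤ c) :
    (numConjClasses P : ℝ) ≤ c ^ n := by
  induction n with
  | zero =>
    have : numConjClasses P ≤ 1 :=
      (Nat.card_le_card_of_surjective _ ConjClasses.mk_surjective).trans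
        (Finite.card_le_one_iff_subsingleton.mpr inferInstance)
    simpa using this
  | succ n ih =>
    obtain ⟨Q, hQ, N, hN, hle⟩ := hP.exists_numConjClasses_le_mul
    calc (numConjClasses P : ℝ)
        ≤ numConjClasses N * numConjClasses Q := by exact_mod_cast hle
      _ ≤ c * c ^ n :=
        mul_le_mul (hk _ N hN) (ih hQ fun i => hk i.castSucc) (Nat.cast_nonneg _) hc
      _ = c ^ (n + 1) := (pow_succ' c n).symm

end IsSubdirectProduct

/-- Let `H` be a subdirect product of finite groups `H₁, …, H_t` (`t ≥ 1`), i.e. a subgroup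
of the direct product projecting onto each factor. If `c > 0` is such that `k(N) < c` for
every normal subgroup `N` of every `H_i`, then `k(H) < c^t`. -/
theorem numConjClasses_subdirectProduct_lt
    (t : ℕ) (ht : 0 < t) (H : Fin t → Type*) [∀ i, Group (H i)] [∀ i, Finite (H i)]
    (P : Subgroup (∀ i, H i))
    (hproj : ∀ i : Fin t, Function.Surjective fun h : P => (h : ∀ j, H j) i)
    (c : ℝ) (hc : 0 < c)
    (hk : ∀ (i : Fin t) (N : Subgroup (H i)), N.Normal → (numConjClasses N : ℝ) < c) :
    (numConjClasses P : ℝ) < c ^ t := by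
  obtain ⟨n, rfl⟩ := Nat.exists_eq_add_one_of_ne_zero ht.ne'
  obtain ⟨Q, hQ, N, hN, hle⟩ := IsSubdirectProduct.exists_numConjClasses_le_mul hproj
  calc (numConjClasses P : ℝ)
      ≤ numConjClasses N * numConjClasses Q := by exact_mod_cast hle
    _ < c * c ^ n :=
      mul_lt_mul (hk _ N hN) (IsSubdirectProduct.numConjClasses_le_pow hc.le n hQ
        fun i N hN => (hk i.castSucc N hN).le) (mod_cast numConjClasses_pos Q) hc.le
    _ = c ^ (n + 1) := (pow_succ' c n).symm
end
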